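/- Let q and q′ be relatively prime positive integers and let r, r′, p, p′ be arbitrary integers. Set v₁ = (r/q + 1/(qq′), r′/q′ + 1/(qq′)) and v₂ = ((r+p)/q + 1/(qq′), (r′+p′)/q′ + 1/(qq′)). Then, regarded as subsets of the quotient torus ℝ²/((1/q)ℤ × (1/q′)ℤ), the qq′ translates of the open square (0, 1/(qq′)) × (0, 1/(qq′)) by the vectors k·v₁, for 0 ≤ k < qq′, are pairwise disjoint; the same holds for the translates by k·v₂, 0 ≤ k < qq′. Moreover, for every pair (i,j) with 0 ≤ i < q′ and 0 ≤ j < q there is exactly one k with 0 ≤ k < qq′ — namely the unique such k with k ≡ i (mod q′) and k ≡ j (mod q) — for which k·v₁ ≡ (i/(qq′), j/(qq′)) modulo (1/q)ℤ × (1/q′)ℤ, and the same k is the unique one with k·v₂ ≡ (i/(qq′), j/(qq′)) modulo (1/q)ℤ × (1/q′)ℤ. -/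

import Mathlib

open Set

noncomputable section

/-- Projection from `ℝ²` onto the quotient torus `ℝ²/((a)ℤ × (b)ℤ)`. -/
def projTorus (a b : ℝ) : ℝ × ℝ → AddCircle a × AddCircle b :=
  fun p => (↑p.1, ↑p.2)

/-!
Put `ε = 1/(qq′)`, so that the lattice is `q′εℤ × qεℤ`. Modulo this lattice both `v₁` and `v₂`
are congruent to the diagonal step `(ε, ε)`, hence `k • vᵢ ≡ (kε, kε)`. Two points
`x + (mε, nε)` and `y + (m′ε, n′ε)` with `x, y` in the half-open square `[0, ε)²` agree on the
torus iff `x = y`, `m ≡ m′ [MOD q′]` and `n ≡ n′ [MOD q]`, so everything reduces to the Chinese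
remainder theorem for the coprime moduli `q` and `q′`.
-/

theorem int_eq_zero_of_sub_eq_mul_of_mem_Ico {ε x y : ℝ} {t : ℤ} (hx : x ∈ Ico 0 ε)
    (hy : y ∈ Ico 0 ε) (h : x - y = t * ε) : t = 0 := by
  have hε : 0 < ε := hx.1.trans_lt hx.2
  have hlt : (t : ℝ) * ε < 1 * ε := by linarith [hx.2, hy.1]
  have hgt : (-1 : ℝ) * ε < t * ε := by linarith [hx.1, hy.2]
  have h₁ : (t : ℝ) < 1 := lt_of_mul_lt_mul_right hlt hε.le
  have h₂ : (-1 : ℝ) < t := lt_of_mul_lt_mul_right hgt hε.le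
  have : -1 < t ∧ t < 1 := ⟨by exact_mod_cast h₂, by exact_mod_cast h₁⟩
  omega

theorem AddCircle.coe_add_int_mul_eq_iff {ε x y : ℝ} (b : ℕ) (hx : x ∈ Ico 0 ε)
    (hy : y ∈ Ico 0 ε) (m n : ℤ) :
    ((x + m * ε : ℝ) : AddCircle ((b : ℝ) * ε)) = ((y + n * ε : ℝ) : AddCircle ((b : ℝ) * ε)) ↔
      x = y ∧ m ≡ n [ZMOD b] := by
  rw [QuotientAddGroup.eq_iff_sub_mem, AddSubgroup.mem_zmultiples_iff, Int.modEq_iff_dvd]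
  simp only [zsmul_eq_mul]
  constructor
  · rintro ⟨z, hz⟩
    have hxy : x - y = ((z * b + n - m : ℤ) : ℝ) * ε := by push_cast; linear_combination -hz
    have h₀ := int_eq_zero_of_sub_eq_mul_of_mem_Ico hx hy hxy
    refine ⟨by simpa [h₀, sub_eq_zero] using hxy, -z, by linear_combination h₀⟩
  · rintro ⟨rfl, c, hc⟩
    refine ⟨-c, ?_⟩
    have hc' : (n : ℝ) - m = b * c := by exact_mod_cast hc
    push_cast
    linear_combination ε * hc'

theorem projTorus_add (a b : ℝ) (z w : ℝ × ℝ) :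
    projTorus a b (z + w) = projTorus a b z + projTorus a b w := rfl

theorem projTorus_nsmul (a b : ℝ) (k : ℕ) (z : ℝ × ℝ) :
    projTorus a b ((k : ℝ) • z) = k • projTorus a b z := by
  simp only [projTorus, Prod.smul_fst, Prod.smul_snd, smul_eq_mul, ← nsmul_eq_mul,
    AddCircle.coe_nsmul, Prod.smul_mk]

theorem projTorus_add_int_mul (a b : ℝ) (z : ℝ × ℝ) (m n : ℤ) :
    projTorus a b (z + ((m : ℝ) * a, (n : ℝ) * b)) = projTorus a b z := by
  simp only [projTorus, Prod.fst_add, Prod.snd_add, AddCircle.coe_add, ← zsmul_eq_mul,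
    AddCircle.coe_zsmul, AddCircle.coe_period, smul_zero, add_zero]

theorem eq_of_modEq_of_modEq_of_lt_mul {a b k l : ℕ} (hab : a.Coprime b) (ha : k ≡ l [MOD a])
    (hb : k ≡ l [MOD b]) (hk : k < a * b) (hl : l < a * b) : k = l :=
  ((Nat.modEq_and_modEq_iff_modEq_mul hab).1 ⟨ha, hb⟩).eq_of_lt_of_lt hk hl

theorem exists_lt_mul_mod_eq_and_modEq_iff {a b i j : ℕ} (hab : a.Coprime b) (hi : i < b)
    (hj : j < a) :
    ∃ k < a * b, k % b = i ∧ k % a = j ∧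
      ∀ k' < a * b, (k' ≡ i [MOD b] ∧ k' ≡ j [MOD a] ↔ k' = k) := by
  set c := Nat.chineseRemainder hab.symm i j
  have hc : (c : ℕ) < a * b := by
    rw [mul_comm]; exact Nat.chineseRemainder_lt_mul _ _ _ (by omega) (by omega)
  refine ⟨c, hc, ?_, ?_, fun k' hk' => ⟨fun ⟨hb, ha⟩ => ?_, fun h => h ▸ c.2⟩⟩
  · exact Eq.trans c.2.1 (Nat.mod_eq_of_lt hi)
  · exact Eq.trans c.2.2 (Nat.mod_eq_of_lt hj)
  · exact eq_of_modEq_of_modEq_of_lt_mul hab (ha.trans c.2.2.symm) (hb.trans c.2.1.symm) hk' hc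

section DiagonalStep

variable {ε : ℝ} {a b : ℕ}

theorem projTorus_add_int_mul_eq_iff {x y : ℝ × ℝ} (hx : x ∈ Ico 0 ε ×ˢ Ico 0 ε)
    (hy : y ∈ Ico 0 ε ×ˢ Ico 0 ε) (m n m' n' : ℤ) :
    projTorus (b * ε) (a * ε) (x + ((m : ℝ) * ε, (n : ℝ) * ε)) =
        projTorus (b * ε) (a * ε) (y + ((m' : ℝ) * ε, (n' : ℝ) * ε)) ↔
      x = y ∧ m ≡ m' [ZMOD b] ∧ n ≡ n' [ZMOD a] := by
  simp only [projTorus, Prod.fst_add, Prod.snd_add,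
    AddCircle.coe_add_int_mul_eq_iff b hx.1 hy.1, AddCircle.coe_add_int_mul_eq_iff a hx.2 hy.2,
    Prod.ext_iff]
  tauto

variable {v : ℝ × ℝ}

theorem projTorus_add_nsmul_of_eq_diag
    (hv : projTorus (b * ε) (a * ε) v = projTorus (b * ε) (a * ε) (ε, ε)) (z : ℝ × ℝ) (k : ℕ) :
    projTorus (b * ε) (a * ε) (z + (k : ℝ) • v) =
      projTorus (b * ε) (a * ε) (z + (((k : ℤ) : ℝ) * ε, ((k : ℤ) : ℝ) * ε)) := by
  rw [projTorus_add, projTorus_nsmul, hv, ← projTorus_nsmul, ← projTorus_add]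
  simp

theorem projTorus_add_nsmul_eq_iff
    (hv : projTorus (b * ε) (a * ε) v = projTorus (b * ε) (a * ε) (ε, ε))
    {x y : ℝ × ℝ} (hx : x ∈ Ico 0 ε ×ˢ Ico 0 ε) (hy : y ∈ Ico 0 ε ×ˢ Ico 0 ε) (k l : ℕ) :
    projTorus (b * ε) (a * ε) (x + (k : ℝ) • v) = projTorus (b * ε) (a * ε) (y + (l : ℝ) • v) ↔
      x = y ∧ k ≡ l [MOD b] ∧ k ≡ l [MOD a] := by
  rw [projTorus_add_nsmul_of_eq_diag hv, projTorus_add_nsmul_of_eq_diag hv,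
    projTorus_add_int_mul_eq_iff hx hy, Int.natCast_modEq_iff, Int.natCast_modEq_iff]

theorem projTorus_nsmul_eq_iff
    (hv : projTorus (b * ε) (a * ε) v = projTorus (b * ε) (a * ε) (ε, ε))
    (hε : 0 < ε) (k i j : ℕ) :
    projTorus (b * ε) (a * ε) ((k : ℝ) • v) =
        projTorus (b * ε) (a * ε) ((i : ℝ) * ε, (j : ℝ) * ε) ↔
      k ≡ i [MOD b] ∧ k ≡ j [MOD a] := by
  have h₀ : (0 : ℝ × ℝ) ∈ Ico 0 ε ×ˢ Ico 0 ε := ⟨⟨le_rfl, hε⟩, ⟨le_rfl, hε⟩⟩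
  have h := projTorus_add_int_mul_eq_iff (a := a) (b := b) h₀ h₀ k k i j
  rw [← zero_add ((k : ℝ) • v), projTorus_add_nsmul_of_eq_diag hv]
  simpa [Int.natCast_modEq_iff] using h

theorem disjoint_projTorus_image_translates
    (hv : projTorus (b * ε) (a * ε) v = projTorus (b * ε) (a * ε) (ε, ε))
    (hab : a.Coprime b) {k l : ℕ} (hk : k < a * b) (hl : l < a * b) (hkl : k ≠ l) :
    Disjoint (projTorus (b * ε) (a * ε) '' ((· + (k : ℝ) • v) '' (Ioo 0 ε ×ˢ Ioo 0 ε)))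
      (projTorus (b * ε) (a * ε) '' ((· + (l : ℝ) • v) '' (Ioo 0 ε ×ˢ Ioo 0 ε))) := by
  have hIco : Ioo 0 ε ×ˢ Ioo 0 ε ⊆ Ico 0 ε ×ˢ Ico 0 ε :=
    prod_mono Ioo_subset_Ico_self Ioo_subset_Ico_self
  rw [Set.disjoint_left]
  rintro _ ⟨_, ⟨x, hx, rfl⟩, rfl⟩ ⟨_, ⟨y, hy, rfl⟩, hyx⟩
  obtain ⟨-, hb, ha⟩ := (projTorus_add_nsmul_eq_iff hv (hIco hy) (hIco hx) l k).1 hyx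
  exact hkl (eq_of_modEq_of_modEq_of_lt_mul hab ha.symm hb.symm hk hl)

end DiagonalStep

/-- combinatorics of the translates of the small square by the
vectors `v₁` and `v₂` on the quotient torus `ℝ²/((1/q)ℤ × (1/q′)ℤ)`. -/
theorem torus_translates_disjoint_and_CRT
    (q q' : ℕ) (hq : 0 < q) (hq' : 0 < q') (hco : Nat.Coprime q q')
    (r r' p p' : ℤ) :
    let v₁ : ℝ × ℝ := ((r : ℝ) / q + 1 / ((q : ℝ) * q'), (r' : ℝ) / q' + 1 / ((q : ℝ) * q'))
    let v₂ : ℝ × ℝ := (((r : ℝ) + p) / q + 1 / ((q : ℝ) * q'),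
      ((r' : ℝ) + p') / q' + 1 / ((q : ℝ) * q'))
    let π := projTorus (1 / (q : ℝ)) (1 / (q' : ℝ))
    let Sq : Set (ℝ × ℝ) := Ioo (0 : ℝ) (1 / ((q : ℝ) * q')) ×ˢ Ioo (0 : ℝ) (1 / ((q : ℝ) * q'))
    -- the `q q′` translates of the square by `k • v₁` are pairwise disjoint in the torus
    (∀ k l : ℕ, k < q * q' → l < q * q' → k ≠ l →
        Disjoint (π '' ((fun z => z + (k : ℝ) • v₁) '' Sq))
          (π '' ((fun z => z + (l : ℝ) • v₁) '' Sq))) ∧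
    -- and likewise for the translates by `k • v₂`
    (∀ k l : ℕ, k < q * q' → l < q * q' → k ≠ l →
        Disjoint (π '' ((fun z => z + (k : ℝ) • v₂) '' Sq))
          (π '' ((fun z => z + (l : ℝ) • v₂) '' Sq))) ∧
    -- the CRT statement: for each `(i, j)` the unique `k < q q′` with
    -- `k • v₁ ≡ (i/(qq′), j/(qq′))` is the CRT solution of `k ≡ i (mod q′)`,
    -- `k ≡ j (mod q)`, and the same `k` is the unique solution for `v₂`
    (∀ i j : ℕ, i < q' → j < q →
      ∃ k : ℕ, k < q * q' ∧ k % q' = i ∧ k % q = j ∧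
        (∀ k' : ℕ, k' < q * q' →
          (π ((k' : ℝ) • v₁) = π ((i : ℝ) / ((q : ℝ) * q'), (j : ℝ) / ((q : ℝ) * q')) ↔ k' = k)) ∧
        (∀ k' : ℕ, k' < q * q' →
          (π ((k' : ℝ) • v₂) = π ((i : ℝ) / ((q : ℝ) * q'), (j : ℝ) / ((q : ℝ) * q')) ↔ k' = k))) := by
  have hq₀ : (q : ℝ) ≠ 0 := by positivity
  have hq'₀ : (q' : ℝ) ≠ 0 := by positivity
  have hπ₁ : 1 / (q : ℝ) = q' * (1 / ((q : ℝ) * q')) := by field_simp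
  have hπ₂ : 1 / (q' : ℝ) = q * (1 / ((q : ℝ) * q')) := by field_simp
  rw [hπ₁, hπ₂]
  generalize hε_def : 1 / ((q : ℝ) * q') = ε at hπ₁ hπ₂ ⊢
  intro v₁ v₂ π Sq
  have hε : 0 < ε := hε_def ▸ by positivity
  have hv (A B : ℤ) : projTorus (q' * ε) (q * ε) ((A : ℝ) / q + ε, (B : ℝ) / q' + ε) =
      projTorus (q' * ε) (q * ε) (ε, ε) := by
    rw [← projTorus_add_int_mul _ _ (ε, ε) A B]
    congr 1
    ext <;> simp only [Prod.fst_add, Prod.snd_add, ← hπ₁, ← hπ₂] <;> ring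
  have hv₁ : projTorus (q' * ε) (q * ε) v₁ = projTorus (q' * ε) (q * ε) (ε, ε) := hv r r'
  have hv₂ : projTorus (q' * ε) (q * ε) v₂ = projTorus (q' * ε) (q * ε) (ε, ε) := by
    simpa using hv (r + p) (r' + p')
  refine ⟨fun k l hk hl hkl => ?_, fun k l hk hl hkl => ?_, fun i j hi hj => ?_⟩
  · exact disjoint_projTorus_image_translates hv₁ hco hk hl hkl
  · exact disjoint_projTorus_image_translates hv₂ hco hk hl hkl
  · obtain ⟨k, hk, hki, hkj, huniq⟩ := exists_lt_mul_mod_eq_and_modEq_iff hco hi hj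
    have hij :
        ((i : ℝ) * ε, (j : ℝ) * ε) = ((i : ℝ) / ((q : ℝ) * q'), (j : ℝ) / ((q : ℝ) * q')) := by
      simp only [← hε_def, div_eq_mul_one_div (i : ℝ), div_eq_mul_one_div (j : ℝ)]
    refine ⟨k, hk, hki, hkj, fun k' hk' => ?_, fun k' hk' => ?_⟩
    · rw [← hij]; exact (projTorus_nsmul_eq_iff hv₁ hε k' i j).trans (huniq k' hk')
    · rw [← hij]; exact (projTorus_nsmul_eq_iff hv₂ hε k' i j).trans (huniq k' hk')

end
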